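/- If Σ_{i=1}^k f̂ᵢ² ≠ 0, then the dual function P^d(σ) tends to −∞ as σ → (−λ₁)⁺ and as σ → +∞, and hence P^d attains its maximum over (−λ₁, ∞) at a unique critical point. -/

import Mathlib

/-!
In `P^d(σ) = -A/(λ₁+σ) - ∑_{i>k} f̂ᵢ²/(λᵢ+σ) - r²σ` the first term is strictly concave on
`(-λ₁, ∞)` because `A > 0`, and the others are concave, so `P^d` is strictly concave there. Since the
middle sum is nonnegative there, `P^d(σ) ≤ -A/(λ₁+σ) - r²σ`, which tends to `-∞` at both ends
of the interval. A continuous function with these limits attains its maximum at an interior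
point, where the derivative vanishes, and strict concavity makes the maximiser unique.
-/

open Filter Set Topology

section Convexity

variable {𝕜 E β : Type*} [CommSemiring 𝕜] [PartialOrder 𝕜] [AddCommMonoid E] [SMul 𝕜 E]
  [AddCommMonoid β] [PartialOrder β] [Module 𝕜 β] {s : Set E} {f : E → β}

theorem StrictConvexOn.smul [PosSMulStrictMono 𝕜 β] {c : 𝕜} (hc : 0 < c)
    (hf : StrictConvexOn 𝕜 s f) : StrictConvexOn 𝕜 s fun x => c • f x :=
  ⟨hf.1, fun x hx y hy hxy a b ha hb hab =>
    calc
      c • f (a • x + b • y) < c • (a • f x + b • f y) :=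
        smul_lt_smul_of_pos_left (hf.2 hx hy hxy ha hb hab) hc
      _ = a • c • f x + b • c • f y := by rw [smul_add, smul_comm c, smul_comm c]⟩

theorem ConcaveOn.sum [IsOrderedAddMonoid β] {ι : Type*} {t : Finset ι} {f : ι → E → β}
    (hs : Convex 𝕜 s) (hf : ∀ i ∈ t, ConcaveOn 𝕜 s (f i)) :
    ConcaveOn 𝕜 s fun x => ∑ i ∈ t, f i x := by
  classical
  induction t using Finset.induction_on with
  | empty => simpa using concaveOn_const (0 : β) hs
  | insert i t hi ih =>
    simp only [Finset.sum_insert hi]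
    exact (hf i (t.mem_insert_self i)).add (ih fun j hj => hf j (Finset.mem_insert_of_mem hj))

end Convexity

theorem strictConvexOn_inv_add (μ : ℝ) : StrictConvexOn ℝ (Ioi (-μ)) fun σ => (μ + σ)⁻¹ := by
  have h := (strictConvexOn_zpow (m := -1) (by norm_num) (by norm_num)).translate_right μ
  have hpre : (fun σ => μ + σ) ⁻¹' Ioi 0 = Ioi (-μ) := by
    ext σ; simp [neg_lt_iff_pos_add']
  rw [hpre] at h
  simpa [Function.comp_def] using h

theorem exists_isMaxOn_Ioi_of_tendsto_atBot {f : ℝ → ℝ} {a : ℝ} (hf : ContinuousOn f (Ioi a))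
    (hl : Tendsto f (𝓝[>] a) atBot) (ht : Tendsto f atTop atBot) :
    ∃ x ∈ Ioi a, IsMaxOn f (Ioi a) x := by
  set x₀ := a + 1
  -- `f < f x₀` outside a compact interval `[p, max v x₀] ⊆ Ioi a`
  obtain ⟨u, hau, hu⟩ := mem_nhdsGT_iff_exists_Ioo_subset.1 (hl.eventually_lt_atBot (f x₀))
  obtain ⟨v, hv⟩ := eventually_atTop.1 (ht.eventually_lt_atBot (f x₀))
  obtain ⟨p, hap, hp⟩ := exists_between (lt_min hau (show a < x₀ by linarith))
  obtain ⟨hpu, hpx⟩ := lt_min_iff.1 hp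
  have hK : Icc p (max v x₀) ⊆ Ioi a := fun y hy => hap.trans_le hy.1
  obtain ⟨c, hcK, hc⟩ := isCompact_Icc.exists_isMaxOn ⟨x₀, hpx.le, le_max_right _ _⟩ (hf.mono hK)
  refine ⟨c, hK hcK, fun y hy => ?_⟩
  by_cases hyK : y ∈ Icc p (max v x₀)
  · exact hc hyK
  · have hx₀c : f x₀ ≤ f c := hc ⟨hpx.le, le_max_right _ _⟩
    rcases not_and_or.1 hyK with hyp | hyq
    · exact ((hu ⟨hy, (not_le.1 hyp).trans hpu⟩).le).trans hx₀c
    · exact ((hv y ((le_max_left _ _).trans (not_le.1 hyq).le)).le).trans hx₀c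

/-- `P^d` with `A = ∑_{i ≤ k} f̂ᵢ²`, weights `c i = f̂ᵢ²` and poles `μ i = λᵢ` for `i > k`. -/
noncomputable def dualFunction {ι : Type*} (A lam r : ℝ) (s : Finset ι) (c μ : ι → ℝ) (σ : ℝ) :
    ℝ :=
  -A / (lam + σ) - ∑ i ∈ s, c i / (μ i + σ) - r ^ 2 * σ

section DualFunction

variable {ι : Type*} {A lam r : ℝ} {s : Finset ι} {c μ : ι → ℝ}

theorem strictConcaveOn_dualFunction (hA : 0 < A) (hc : ∀ i ∈ s, 0 ≤ c i)
    (hμ : ∀ i ∈ s, lam ≤ μ i) : StrictConcaveOn ℝ (Ioi (-lam)) (dualFunction A lam r s c μ) := by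
  have hpole : StrictConcaveOn ℝ (Ioi (-lam)) fun σ => -(A • (lam + σ)⁻¹) :=
    ((strictConvexOn_inv_add lam).smul hA).neg
  have hsum : ConcaveOn ℝ (Ioi (-lam)) fun σ => ∑ i ∈ s, -(c i • (μ i + σ)⁻¹) :=
    ConcaveOn.sum (convex_Ioi _) fun i hi =>
      (((strictConvexOn_inv_add (μ i)).convexOn.smul (hc i hi)).neg).subset
        (Ioi_subset_Ioi (neg_le_neg (hμ i hi))) (convex_Ioi _)
  have hlin : ConcaveOn ℝ (Ioi (-lam)) fun σ => -(r ^ 2 • σ) :=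
    ((convexOn_id (convex_Ioi _)).smul (sq_nonneg r)).neg
  refine (hpole.add_concaveOn (hsum.add hlin)).congr fun σ _ => ?_
  simp only [dualFunction, Pi.add_apply, smul_eq_mul, Finset.sum_neg_distrib, div_eq_mul_inv]
  ring

theorem dualFunction_le (hc : ∀ i ∈ s, 0 ≤ c i) (hμ : ∀ i ∈ s, lam ≤ μ i) {σ : ℝ}
    (hσ : -lam < σ) : dualFunction A lam r s c μ σ ≤ -A / (lam + σ) - r ^ 2 * σ := by
  have : 0 ≤ ∑ i ∈ s, c i / (μ i + σ) :=
    Finset.sum_nonneg fun i hi => div_nonneg (hc i hi) (by linarith [hμ i hi])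
  unfold dualFunction
  linarith

theorem tendsto_dualFunction_nhdsGT (hA : 0 < A) (hc : ∀ i ∈ s, 0 ≤ c i)
    (hμ : ∀ i ∈ s, lam ≤ μ i) :
    Tendsto (dualFunction A lam r s c μ) (𝓝[>] (-lam)) atBot := by
  have hshift : Tendsto (fun σ => lam + σ) (𝓝[>] (-lam)) (𝓝[>] 0) := by
    refine tendsto_nhdsWithin_iff.2 ⟨?_, ?_⟩
    · simpa using ((continuous_const_add lam).tendsto (-lam)).mono_left nhdsWithin_le_nhds
    · filter_upwards [self_mem_nhdsWithin] with σ (hσ : -lam < σ)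
      exact mem_Ioi.2 (by linarith)
  have hpole : Tendsto (fun σ => -A / (lam + σ)) (𝓝[>] (-lam)) atBot := by
    simpa only [div_eq_mul_inv, Function.comp_def] using
      (tendsto_inv_nhdsGT_zero.comp hshift).const_mul_atTop_of_neg (neg_lt_zero.2 hA)
  have hlin : Tendsto (fun σ => -(r ^ 2 * σ)) (𝓝[>] (-lam)) (𝓝 (-(r ^ 2 * -lam))) :=
    ((continuous_const.mul continuous_id).neg.tendsto _).mono_left nhdsWithin_le_nhds
  refine tendsto_atBot_mono' _ ?_ (by simpa only [sub_eq_add_neg] using hpole.atBot_add hlin)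
  filter_upwards [self_mem_nhdsWithin] with σ hσ using dualFunction_le hc hμ hσ

theorem tendsto_dualFunction_atTop (hr : r ≠ 0) (hA : 0 ≤ A) (hc : ∀ i ∈ s, 0 ≤ c i)
    (hμ : ∀ i ∈ s, lam ≤ μ i) : Tendsto (dualFunction A lam r s c μ) atTop atBot := by
  refine tendsto_atBot_mono' _ ?_
    (tendsto_id.const_mul_atTop_of_neg (neg_lt_zero.2 (by positivity : 0 < r ^ 2)))
  filter_upwards [eventually_gt_atTop (-lam)] with σ hσ
  have hpole : 0 ≤ A / (lam + σ) := div_nonneg hA (by linarith)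
  have hbound := dualFunction_le (A := A) (r := r) hc hμ hσ
  rw [neg_div] at hbound
  simp only [id]
  linarith

end DualFunction

theorem stmt_8_general {n : ℕ} (lam fh : Fin n → ℝ) (r : ℝ) (k : ℕ) (lam1 : ℝ)
    (hr : 0 < r)
    (hhigh : ∀ i : Fin n, k ≤ (i : ℕ) → lam1 < lam i)
    (hf0 : ∑ i ∈ Finset.univ.filter (fun i : Fin n => (i : ℕ) < k), (fh i)^2 ≠ 0)
    (Pd : ℝ → ℝ)
    (hPd : ∀ σ : ℝ, Pd σ =
      -(∑ i ∈ Finset.univ.filter (fun i : Fin n => (i : ℕ) < k), (fh i)^2) / (lam1 + σ)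
      - ∑ i ∈ Finset.univ.filter (fun i : Fin n => k ≤ (i : ℕ)),
          (fh i)^2 / (lam i + σ)
      - r^2 * σ) :
    Filter.Tendsto Pd (nhdsWithin (-lam1) (Set.Ioi (-lam1))) Filter.atBot ∧
    Filter.Tendsto Pd Filter.atTop Filter.atBot ∧
    ∃! σb : ℝ, σb ∈ Set.Ioi (-lam1) ∧ deriv Pd σb = 0 ∧
      IsMaxOn Pd (Set.Ioi (-lam1)) σb := by
  have hA := (Finset.sum_nonneg fun i _ => sq_nonneg (fh i)).lt_of_ne' hf0
  have hc : ∀ i ∈ Finset.univ.filter (fun i : Fin n => k ≤ (i : ℕ)), 0 ≤ fh i ^ 2 :=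
    fun i _ => sq_nonneg (fh i)
  have hμ : ∀ i ∈ Finset.univ.filter (fun i : Fin n => k ≤ (i : ℕ)), lam1 ≤ lam i :=
    fun i hi => (hhigh i (Finset.mem_filter.1 hi).2).le
  obtain rfl : Pd = dualFunction _ lam1 r _ (fun i => fh i ^ 2) lam := funext hPd
  have hconcave := strictConcaveOn_dualFunction (r := r) hA hc hμ
  have hleft := tendsto_dualFunction_nhdsGT (r := r) hA hc hμ
  have hright := tendsto_dualFunction_atTop hr.ne' hA.le hc hμ
  obtain ⟨σb, hσb, hmax⟩ := exists_isMaxOn_Ioi_of_tendsto_atBot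
    (hconcave.concaveOn.continuousOn isOpen_Ioi) hleft hright
  refine ⟨hleft, hright, σb, ⟨hσb, (hmax.isLocalMax (Ioi_mem_nhds hσb)).deriv_eq_zero, hmax⟩, ?_⟩
  rintro σ ⟨hσ, -, hσmax⟩
  exact hconcave.eq_of_isMaxOn hσmax hmax hσ hσb

/-- If Σ_{i<k} fhᵢ² ≠ 0, then Pd tends to −∞ as σ → (−λ₁)⁺ and as σ → +∞, and Pd
attains its maximum over (−λ₁, ∞) at a unique critical point. -/
theorem stmt_8 {n : ℕ} (lam fh : Fin n → ℝ) (r : ℝ) (k : ℕ) (lam1 : ℝ)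
    (hr : 0 < r) (hk : 0 < k) (hkn : k ≤ n)
    (hlow : ∀ i : Fin n, (i : ℕ) < k → lam i = lam1)
    (hhigh : ∀ i : Fin n, k ≤ (i : ℕ) → lam1 < lam i)
    (hf0 : ∑ i ∈ Finset.univ.filter (fun i : Fin n => (i : ℕ) < k), (fh i)^2 ≠ 0)
    (Pd : ℝ → ℝ)
    (hPd : ∀ σ : ℝ, Pd σ =
      -(∑ i ∈ Finset.univ.filter (fun i : Fin n => (i : ℕ) < k), (fh i)^2) / (lam1 + σ)
      - ∑ i ∈ Finset.univ.filter (fun i : Fin n => k ≤ (i : ℕ)),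
          (fh i)^2 / (lam i + σ)
      - r^2 * σ) :
    Filter.Tendsto Pd (nhdsWithin (-lam1) (Set.Ioi (-lam1))) Filter.atBot ∧
    Filter.Tendsto Pd Filter.atTop Filter.atBot ∧
    ∃! σb : ℝ, σb ∈ Set.Ioi (-lam1) ∧ deriv Pd σb = 0 ∧
      IsMaxOn Pd (Set.Ioi (-lam1)) σb :=
  stmt_8_general lam fh r k lam1 hr hhigh hf0 Pd hPd
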